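/- arXiv:2410.02559 — 4 statements merged into one kernel-verified Lean document; each statement's English description precedes it below -/
import Mathlib

section
/- Let d ≥ 1 and let F : ℝ^d → ℝ be convex and attain its minimum at a point x*. Let K ∈ (0,1), δ ∈ ℝ, E ≥ 0, γ₀ > 0, and let Δ ≥ 0, Θ ≥ 0 satisfy F(x₀) − F(x*) ≤ Δ and ‖x₀ − x*‖² ≤ Θ. For s ≥ 0 set γ_s = K^{s/2}·γ₀ and F^{(γ_s)}(x) = F(x) + (γ_s/2)‖x − x₀‖², and let x_s* be the (unique) minimizer of F^{(γ_s)}. Suppose a sequence (x_s)_{s≥0} starts at the given x₀ and satisfies, for every s ≥ 0, F^{(γ_s)}(x_{s+1}) − F^{(γ_s)}(x_s*) − δ ≤ K·(F^{(γ_s)}(x_s) − F^{(γ_s)}(x_s*) − δ) + E. Then for every integer S ≥ 1, F(x_S) − F(x*) ≤ δ + K^S·(Δ − δ) + (1/2 + 2/√K)·K^{S/2}·γ₀·Θ + E/(1 − K). -/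
/-!
Write `F_γ y = F y + γ/2 ‖y - x₀‖²` and let `a_s` be the optimality gap of `x_s` for `F_{γ_s}`.
Passing from `γ_s` to the smaller `γ_{s+1}` does not increase `F_γ (x_{s+1})` and lowers the
minimum of `F_γ` by at most `(γ_s - γ_{s+1}) Θ / 2`, because a minimizer of a regularized
objective is at least as close to `x₀` as `x*`. Hence
`a_{s+1} ≤ K a_s + (1 - K) δ + Err + (γ_s - γ_{s+1}) Θ / 2`, a linear recursion that unrolls in
closed form since `γ_s` decays geometrically with ratio `√K`. Finally
`F (x_S) - F x* ≤ a_S + γ_S Θ / 2`.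
-/

section Regularized

variable {E : Type*} [SeminormedAddCommGroup E] (F : E → ℝ) (x₀ : E)

noncomputable def regularized (γ : ℝ) (y : E) : ℝ := F y + γ / 2 * ‖y - x₀‖ ^ 2

variable {F x₀}

lemma norm_sub_sq_le_of_regularized_min {γ : ℝ} (hγ : 0 < γ) {m z : E}
    (hm : ∀ y, regularized F x₀ γ m ≤ regularized F x₀ γ y) (hz : ∀ y, F z ≤ F y) :
    ‖m - x₀‖ ^ 2 ≤ ‖z - x₀‖ ^ 2 := by
  have hmz := hm z
  have hzm := hz m
  unfold regularized at hmz
  have : γ / 2 * ‖m - x₀‖ ^ 2 ≤ γ / 2 * ‖z - x₀‖ ^ 2 := by linarith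
  exact le_of_mul_le_mul_left this (by positivity)

lemma regularized_gap_succ_le {γ γ' Θ K δ Err : ℝ} (hγ : γ' ≤ γ) {y y' m m' : E}
    (hm : ∀ z, regularized F x₀ γ m ≤ regularized F x₀ γ z) (hm' : ‖m' - x₀‖ ^ 2 ≤ Θ)
    (hy' : regularized F x₀ γ y' - regularized F x₀ γ m - δ
      ≤ K * (regularized F x₀ γ y - regularized F x₀ γ m - δ) + Err) :
    regularized F x₀ γ' y' - regularized F x₀ γ' m'
      ≤ K * (regularized F x₀ γ y - regularized F x₀ γ m) + (1 - K) * δ + Err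
        + (γ - γ') / 2 * Θ := by
  have hmm' := hm m'
  unfold regularized at *
  have hy'_drop : 0 ≤ (γ - γ') / 2 * ‖y' - x₀‖ ^ 2 := by
    have : 0 ≤ γ - γ' := by linarith
    positivity
  have hm'Θ : (γ - γ') / 2 * ‖m' - x₀‖ ^ 2 ≤ (γ - γ') / 2 * Θ :=
    mul_le_mul_of_nonneg_left hm' (by linarith)
  linarith

lemma regularized_gap_self_le {γ : ℝ} (hγ : 0 ≤ γ) (m : E) {z : E} (hz : ∀ y, F z ≤ F y) :
    regularized F x₀ γ x₀ - regularized F x₀ γ m ≤ F x₀ - F z := by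
  have hzm := hz m
  have : 0 ≤ γ / 2 * ‖m - x₀‖ ^ 2 := by positivity
  simp only [regularized, sub_self, norm_zero]
  linarith

lemma sub_le_regularized_gap {γ : ℝ} (hγ : 0 ≤ γ) (y : E) {m : E}
    (hm : ∀ w, regularized F x₀ γ m ≤ regularized F x₀ γ w) (z : E) :
    F y - F z ≤ regularized F x₀ γ y - regularized F x₀ γ m + γ / 2 * ‖z - x₀‖ ^ 2 := by
  have hmz := hm z
  have : 0 ≤ γ / 2 * ‖y - x₀‖ ^ 2 := by positivity
  unfold regularized at *
  linarith

end Regularized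

lemma sub_le_of_le_mul_add_geom {K q B c : ℝ} {b : ℕ → ℝ} (hqK : q ^ 2 = K)
    (h : ∀ s, b (s + 1) ≤ K * b s + (1 - K) * B + (q ^ (s + 1) - q ^ (s + 2)) * c) (s : ℕ) :
    b s - B ≤ K ^ s * (b 0 - B - c) + q ^ s * c := by
  induction s with
  | zero => simp
  | succ s ih =>
    subst hqK
    linear_combination h s + q ^ 2 * ih

section GeometricSchedule

variable {E : Type*} [SeminormedAddCommGroup E] {F : E → ℝ} {x₀ : E} {x xmin : ℕ → E}
  {γ : ℕ → ℝ} {q γ0 Θ K δ Err : ℝ}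

lemma regularized_gap_le_geometric (hq0 : 0 < q) (hq1 : q ≤ 1) (hqK : q ^ 2 = K) (hK1 : K < 1)
    (hγ0 : 0 ≤ γ0) (hγ : ∀ s, γ s = q ^ s * γ0)
    (hxmin : ∀ s y, regularized F x₀ (γ s) (xmin s) ≤ regularized F x₀ (γ s) y)
    (hxminΘ : ∀ s, ‖xmin s - x₀‖ ^ 2 ≤ Θ)
    (hrec : ∀ s, regularized F x₀ (γ s) (x (s + 1)) - regularized F x₀ (γ s) (xmin s) - δ
      ≤ K * (regularized F x₀ (γ s) (x s) - regularized F x₀ (γ s) (xmin s) - δ) + Err)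
    (s : ℕ) :
    regularized F x₀ (γ s) (x s) - regularized F x₀ (γ s) (xmin s) - (δ + Err / (1 - K))
      ≤ K ^ s * (regularized F x₀ (γ 0) (x 0) - regularized F x₀ (γ 0) (xmin 0)
          - (δ + Err / (1 - K)) - γ0 * Θ / (2 * q))
        + q ^ s * (γ0 * Θ / (2 * q)) := by
  refine sub_le_of_le_mul_add_geom
    (b := fun s => regularized F x₀ (γ s) (x s) - regularized F x₀ (γ s) (xmin s)) hqK
    (fun s => ?_) s
  have hγle : γ (s + 1) ≤ γ s := by
    rw [show γ (s + 1) = q * γ s by rw [hγ, hγ]; ring]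
    exact mul_le_of_le_one_left (hγ s ▸ by positivity) hq1
  have hgap_succ := regularized_gap_succ_le hγle (hxmin s) (hxminΘ (s + 1)) (hrec s)
  have hErr : (1 - K) * (δ + Err / (1 - K)) = (1 - K) * δ + Err := by
    field_simp [(sub_pos.mpr hK1).ne']
  have hΘ : (γ s - γ (s + 1)) / 2 * Θ = (q ^ (s + 1) - q ^ (s + 2)) * (γ0 * Θ / (2 * q)) := by
    rw [hγ, hγ]; field_simp; ring
  linarith

end GeometricSchedule

theorem stmt0_general (d : ℕ)
    (F : EuclideanSpace ℝ (Fin d) → ℝ)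
    (xstar : EuclideanSpace ℝ (Fin d)) (hxstar : ∀ y, F xstar ≤ F y)
    (K δ Err γ0 Δ Θ : ℝ)
    (hK0 : 0 < K) (hK1 : K < 1) (hErr : 0 ≤ Err) (hγ0 : 0 < γ0)
    (x : ℕ → EuclideanSpace ℝ (Fin d))
    (hΔ : F (x 0) - F xstar ≤ Δ) (hΘ : ‖x 0 - xstar‖ ^ 2 ≤ Θ)
    (γ : ℕ → ℝ) (hγ : ∀ s, γ s = Real.sqrt K ^ s * γ0)
    (xmin : ℕ → EuclideanSpace ℝ (Fin d))
    (hxmin : ∀ s, ∀ y, F (xmin s) + γ s / 2 * ‖xmin s - x 0‖ ^ 2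
      ≤ F y + γ s / 2 * ‖y - x 0‖ ^ 2)
    (hrec : ∀ s,
      (F (x (s + 1)) + γ s / 2 * ‖x (s + 1) - x 0‖ ^ 2)
          - (F (xmin s) + γ s / 2 * ‖xmin s - x 0‖ ^ 2) - δ
        ≤ K * ((F (x s) + γ s / 2 * ‖x s - x 0‖ ^ 2)
              - (F (xmin s) + γ s / 2 * ‖xmin s - x 0‖ ^ 2) - δ) + Err) :
    ∀ S : ℕ, 1 ≤ S →
      F (x S) - F xstar
        ≤ δ + K ^ S * (Δ - δ)
          + (1 / 2 + 2 / Real.sqrt K) * Real.sqrt K ^ S * γ0 * Θ + Err / (1 - K) := by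
  intro S _
  set q := Real.sqrt K
  have hq : 0 < q := Real.sqrt_pos.mpr hK0
  have hqK : q ^ 2 = K := Real.sq_sqrt hK0.le
  have hq1 : q ≤ 1 := Real.sqrt_le_one.mpr hK1.le
  have hΘ' : ‖xstar - x 0‖ ^ 2 ≤ Θ := norm_sub_rev xstar (x 0) ▸ hΘ
  have hγpos s : 0 < γ s := hγ s ▸ by positivity
  have hxminΘ s : ‖xmin s - x 0‖ ^ 2 ≤ Θ :=
    (norm_sub_sq_le_of_regularized_min (hγpos s) (hxmin s) hxstar).trans hΘ'
  have hgap := regularized_gap_le_geometric hq hq1 hqK hK1 hγ0.le hγ hxmin hxminΘ hrec S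
  have hgap0 := regularized_gap_self_le (x₀ := x 0) (hγpos 0).le (xmin 0) hxstar
  have hfinal := sub_le_regularized_gap (hγpos S).le (x S) (hxmin S) xstar
  have hc0 : 0 ≤ γ0 * Θ / (2 * q) := by have := (sq_nonneg _).trans hΘ'; positivity
  have hE0 : 0 ≤ Err / (1 - K) := div_nonneg hErr (sub_pos.mpr hK1).le
  have hinit : K ^ S * (regularized F (x 0) (γ 0) (x 0) - regularized F (x 0) (γ 0) (xmin 0)
      - (δ + Err / (1 - K)) - γ0 * Θ / (2 * q)) ≤ K ^ S * (Δ - δ) :=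
    mul_le_mul_of_nonneg_left (by linarith) (by positivity)
  have hreg : γ S / 2 * ‖xstar - x 0‖ ^ 2 ≤ q ^ S * γ0 / 2 * Θ := by
    rw [hγ]; exact mul_le_mul_of_nonneg_left hΘ' (by positivity)
  have hlast : q ^ S * (γ0 * Θ / (2 * q)) ≤ 2 / q * q ^ S * γ0 * Θ := by
    rw [show 2 / q * q ^ S * γ0 * Θ = 4 * (q ^ S * (γ0 * Θ / (2 * q))) by field_simp; ring]
    linarith [mul_nonneg (pow_nonneg hq.le S) hc0]
  linarith

/-- **AdaptRdct-C convergence (deterministic form).**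
At stage `s`, the convex objective `F` is replaced by the regularized objective
`F^(γ_s) y = F y + γ_s/2 * ‖y - x 0‖²` with `γ s = (√K)^s * γ₀`, whose minimizer is `xmin s`.
The inner solver satisfies the ZOOD-type decrease inequality with errors `δ` and `Err`. -/
theorem stmt0 (d : ℕ) (hd : 1 ≤ d)
    (F : EuclideanSpace ℝ (Fin d) → ℝ)
    (hF : ConvexOn ℝ Set.univ F)
    (xstar : EuclideanSpace ℝ (Fin d)) (hxstar : ∀ y, F xstar ≤ F y)
    (K δ Err γ0 Δ Θ : ℝ)
    (hK0 : 0 < K) (hK1 : K < 1) (hErr : 0 ≤ Err) (hγ0 : 0 < γ0)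
    (hΔ0 : 0 ≤ Δ) (hΘ0 : 0 ≤ Θ)
    (x : ℕ → EuclideanSpace ℝ (Fin d))
    (hΔ : F (x 0) - F xstar ≤ Δ) (hΘ : ‖x 0 - xstar‖ ^ 2 ≤ Θ)
    (γ : ℕ → ℝ) (hγ : ∀ s, γ s = Real.sqrt K ^ s * γ0)
    (xmin : ℕ → EuclideanSpace ℝ (Fin d))
    (hxmin : ∀ s, ∀ y, F (xmin s) + γ s / 2 * ‖xmin s - x 0‖ ^ 2
      ≤ F y + γ s / 2 * ‖y - x 0‖ ^ 2)
    (hrec : ∀ s,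
      (F (x (s + 1)) + γ s / 2 * ‖x (s + 1) - x 0‖ ^ 2)
          - (F (xmin s) + γ s / 2 * ‖xmin s - x 0‖ ^ 2) - δ
        ≤ K * ((F (x s) + γ s / 2 * ‖x s - x 0‖ ^ 2)
              - (F (xmin s) + γ s / 2 * ‖xmin s - x 0‖ ^ 2) - δ) + Err) :
    ∀ S : ℕ, 1 ≤ S →
      F (x S) - F xstar
        ≤ δ + K ^ S * (Δ - δ)
          + (1 / 2 + 2 / Real.sqrt K) * Real.sqrt K ^ S * γ0 * Θ + Err / (1 - K) :=
  stmt0_general d F xstar hxstar K δ Err γ0 Δ Θ hK0 hK1 hErr hγ0 x hΔ hΘ γ hγ xmin hxmin hrec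
end

section
/- Let σ > 0 and let F : ℝ^d → ℝ be σ-weakly convex; set λ = 1/(2σ). Fix x̄ ∈ ℝ^d, let x̂ = prox_{λF}(x̄) be the minimizer of F̂(x) := F(x) + σ‖x − x̄‖², and let K ∈ (0,1), δ ≥ 0, E ≥ 0. If x' ∈ ℝ^d satisfies F̂(x') − F̂(x̂) − δ ≤ K·(F̂(x̄) − F̂(x̂) − δ) + E, then (λ/4)·‖(x̄ − x̂)/λ‖² ≤ ((2K+1)/(1−K))·(F(x̄) − F(x')) + 3δ + 3E/(1−K); equivalently, (λ/4)‖∇F_λ(x̄)‖² ≤ ((2K+1)/(1−K))(F(x̄) − F(x')) + 3δ + 3E/(1−K). -/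
/-!
Since `F` is `σ`-weakly convex, `F̂ = F + σ‖· - x̄‖²` is `σ`-strongly convex, so at its minimizer
`x̂` the gap `F̂ x̄ - F̂ x̂` is at least `σ/2 ‖x̄ - x̂‖² = λ/4 ‖(x̄ - x̂)/λ‖²`. The inexact decrease
condition bounds `(1 - K)` times this gap by `F x̄ - F x' + (1 - K) δ + E`, which is dominated
by the claimed right-hand side.
-/

open Filter Topology

section StrongConvexity

variable {E : Type*} [NormedAddCommGroup E] {s : Set E} {f : E → ℝ} {m : ℝ}

theorem StrongConvexOn.add_sq_le_of_isMinOn [NormedSpace ℝ E] {x₀ x : E}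
    (hf : StrongConvexOn s m f) (hmin : IsMinOn f s x₀) (hx₀ : x₀ ∈ s) (hx : x ∈ s) :
    f x₀ + m / 2 * ‖x - x₀‖ ^ 2 ≤ f x := by
  rw [norm_sub_rev]
  set c := m / 2 * ‖x₀ - x‖ ^ 2
  -- Compare `f x₀` with `f` at the point `(1 - t) • x₀ + t • x` of the segment, then let `t → 0`.
  have hsegment : ∀ t ∈ Set.Ioo (0 : ℝ) 1, f x₀ + (1 - t) * c ≤ f x := by
    rintro t ⟨ht0, ht1⟩
    have hconv : f ((1 - t) • x₀ + t • x) ≤ (1 - t) * f x₀ + t * f x - (1 - t) * t * c := by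
      simpa using hf.2 hx₀ hx (sub_nonneg.2 ht1.le) ht0.le (sub_add_cancel 1 t)
    have hle : f x₀ ≤ f ((1 - t) • x₀ + t • x) :=
      hmin (hf.1 hx₀ hx (sub_nonneg.2 ht1.le) ht0.le (sub_add_cancel 1 t))
    have : t * (f x₀ + (1 - t) * c) ≤ t * f x := by nlinarith
    exact le_of_mul_le_mul_left this ht0
  have hlim : Tendsto (fun t : ℝ => f x₀ + (1 - t) * c) (𝓝[>] 0) (𝓝 (f x₀ + c)) :=
    (Continuous.tendsto' (by fun_prop) 0 _ (by simp)).mono_left nhdsWithin_le_nhds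
  exact le_of_tendsto hlim (mem_of_superset (Ioo_mem_nhdsGT one_pos) hsegment)

theorem ConvexOn.strongConvexOn_add_mul_sq_norm_sub [InnerProductSpace ℝ E] {ρ μ : ℝ} (c : E)
    (hf : ConvexOn ℝ s fun y => f y + ρ / 2 * ‖y‖ ^ 2) :
    StrongConvexOn s (2 * μ - ρ) fun y => f y + μ * ‖y - c‖ ^ 2 := by
  rw [strongConvexOn_iff_convex]
  have haffine : ConvexOn ℝ s fun y => -(2 * μ) * inner ℝ c y + μ * ‖c‖ ^ 2 :=
    ((-(2 * μ)) • innerSL ℝ c).toLinearMap.convexOn hf.1 |>.add_const _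
  refine (hf.add haffine).congr fun y _ => ?_
  simp only [Pi.add_apply]
  rw [norm_sub_sq_real, real_inner_comm]
  ring

end StrongConvexity

theorem le_of_inexact_decrease {K δ Err g D : ℝ} (hK0 : 0 ≤ K) (hK1 : K < 1) (hδ : 0 ≤ δ)
    (hErr : 0 ≤ Err) (hg : 0 ≤ g) (hdecrease : (1 - K) * (g - δ) - Err ≤ D) :
    g ≤ (2 * K + 1) / (1 - K) * D + 3 * δ + 3 * Err / (1 - K) := by
  have hK : 0 < 1 - K := sub_pos.2 hK1
  -- With `Y := (D + Err) / (1 - K) + δ ≥ g ≥ 0`, the right-hand side is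
  -- `(2K + 1) Y + 2 (1 - K) δ + 2 Err`.
  have hY : g ≤ (D + Err) / (1 - K) + δ := by
    rw [← sub_le_iff_le_add, le_div_iff₀ hK]
    linarith
  have hrhs : (2 * K + 1) / (1 - K) * D + 3 * δ + 3 * Err / (1 - K)
      = (2 * K + 1) * ((D + Err) / (1 - K) + δ) + 2 * (1 - K) * δ + 2 * Err := by
    field_simp
    ring
  rw [hrhs]
  nlinarith [mul_nonneg hK0 (hg.trans hY), mul_nonneg hK.le hδ]

/-- **Per-stage bound in the AdaptRdct-NC analysis.**
`F` is `σ`-weakly convex, `lam = 1/(2σ)`, `xhat = prox_{lam F}(xbar)` is the minimizer of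
`F̂ z = F z + σ‖z - xbar‖²`, and `x'` satisfies the ZOOD-type decrease inequality starting
from `xbar`.  Then the squared Moreau-envelope gradient `‖(xbar - xhat)/lam‖²` is controlled. -/
theorem stmt4 (d : ℕ) (σ : ℝ) (hσ : 0 < σ)
    (F : EuclideanSpace ℝ (Fin d) → ℝ)
    (hweak : ConvexOn ℝ Set.univ (fun y => F y + σ / 2 * ‖y‖ ^ 2))
    (lam : ℝ) (hlam : lam = 1 / (2 * σ))
    (xbar xhat : EuclideanSpace ℝ (Fin d))
    (hxhat : ∀ z, F xhat + σ * ‖xhat - xbar‖ ^ 2 ≤ F z + σ * ‖z - xbar‖ ^ 2)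
    (K δ Err : ℝ) (hK0 : 0 < K) (hK1 : K < 1) (hδ : 0 ≤ δ) (hErr : 0 ≤ Err)
    (x' : EuclideanSpace ℝ (Fin d))
    (hzood : (F x' + σ * ‖x' - xbar‖ ^ 2) - (F xhat + σ * ‖xhat - xbar‖ ^ 2) - δ
      ≤ K * (F xbar - (F xhat + σ * ‖xhat - xbar‖ ^ 2) - δ) + Err) :
    lam / 4 * ‖(1 / lam) • (xbar - xhat)‖ ^ 2
      ≤ (2 * K + 1) / (1 - K) * (F xbar - F x') + 3 * δ + 3 * Err / (1 - K) := by
  have hstrong : StrongConvexOn Set.univ σ fun z => F z + σ * ‖z - xbar‖ ^ 2 := by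
    simpa [two_mul] using hweak.strongConvexOn_add_mul_sq_norm_sub (μ := σ) xbar
  have hgap : F xhat + σ * ‖xhat - xbar‖ ^ 2 + σ / 2 * ‖xbar - xhat‖ ^ 2 ≤ F xbar := by
    simpa using hstrong.add_sq_le_of_isMinOn (fun z _ => hxhat z) (Set.mem_univ xhat)
      (Set.mem_univ xbar)
  have hlhs : lam / 4 * ‖(1 / lam) • (xbar - xhat)‖ ^ 2 = σ / 2 * ‖xbar - xhat‖ ^ 2 := by
    rw [norm_smul, hlam, Real.norm_of_nonneg (by positivity)]
    field_simp
    ring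
  rw [hlhs]
  refine (le_sub_iff_add_le'.2 hgap).trans (le_of_inexact_decrease hK0.le hK1 hδ hErr ?_ ?_)
  · linarith [mul_nonneg hσ.le (sq_nonneg ‖xbar - xhat‖)]
  · linarith [mul_nonneg hσ.le (sq_nonneg ‖x' - xbar‖)]
end

section
/- Let f, r : ℝ^d → ℝ with r convex, let L > 0, μ > 0, and let f_μ : ℝ^d → ℝ be a convex, differentiable, L-smooth function satisfying |f_μ(z) − f(z)| ≤ Lμ²/2 for all z ∈ ℝ^d. Set F = f + r. Let 0 < η ≤ 1/L, let v ∈ ℝ^d, x ∈ ℝ^d, x⁺ = prox_{ηr}(x − ηv), g = (x − x⁺)/η, and Δ = v − ∇f_μ(x). Then for every y ∈ ℝ^d: F(y) ≥ F(x⁺) + ⟨g, y − x⟩ + (η/2)‖g‖² + ⟨Δ, x⁺ − y⟩ − Lμ². -/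
/-!
Both lower bounds used here (the gradient inequality for `fμ` and the subgradient inequality
for `r` at the prox point) come from one principle: a convex function that dominates, near `p`,
an affine function of `t` up to an `O(t²)` error dominates that affine function on the whole
segment. For `fμ` the error term is supplied by `L`-smoothness, for `r` by the optimality of `x⁺`
in the prox problem. Adding them to the descent bound `fμ x⁺ ≤ fμ x + ⟪∇fμ x, x⁺ - x⟫ + L/2 ‖x⁺ - x‖²`,
the `‖g‖²` terms combine to `η (1 - ηL/2) ‖g‖² ≥ η/2 ‖g‖²`, and passing between `fμ` and `f` costs
`Lμ²/2` twice.
-/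

open scoped RealInnerProductSpace
open Filter Topology Set

lemma le_zero_of_forall_le_mul {b c : ℝ} (h : ∀ t : ℝ, 0 < t → t ≤ 1 → b ≤ t * c) : b ≤ 0 := by
  have hlim : Tendsto (fun t : ℝ => t * c) (𝓝[>] 0) (𝓝 0) := by
    simpa using (tendsto_nhdsWithin_of_tendsto_nhds (tendsto_id (x := 𝓝 (0 : ℝ)))).mul_const c
  exact ge_of_tendsto hlim (by filter_upwards [Ioc_mem_nhdsGT one_pos] with t ht using h t ht.1 ht.2)

section ConvexLowerBounds

variable {E : Type*} [NormedAddCommGroup E] [InnerProductSpace ℝ E]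

lemma ConvexOn.add_le_of_forall_sub_sq_le {h : E → ℝ} (hh : ConvexOn ℝ univ h) {p q : E}
    {a c : ℝ} (hmodel : ∀ t : ℝ, 0 < t → t ≤ 1 → h p + t * a - t ^ 2 * c ≤ h (p + t • (q - p))) :
    h p + a ≤ h q := by
  suffices h p + a - h q ≤ 0 by linarith
  refine le_zero_of_forall_le_mul (c := c) fun t ht ht1 => ?_
  have hseg : h (p + t • (q - p)) ≤ (1 - t) * h p + t * h q := by
    simpa [show p + t • (q - p) = (1 - t) • p + t • q by module] using
      hh.2 (mem_univ p) (mem_univ q) (by linarith) ht.le (by ring)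
  have := hmodel t ht ht1
  exact le_of_mul_le_mul_left (by linarith : t * (h p + a - h q) ≤ t * (t * c)) ht

lemma ConvexOn.add_inner_le_of_abs_sub_inner_le {f : E → ℝ} (hf : ConvexOn ℝ univ f) {p u : E}
    {L : ℝ} (happrox : ∀ q, |f q - f p - ⟪u, q - p⟫| ≤ L / 2 * ‖q - p‖ ^ 2) (q : E) :
    f p + ⟪u, q - p⟫ ≤ f q := by
  refine hf.add_le_of_forall_sub_sq_le (c := L / 2 * ‖q - p‖ ^ 2) fun t _ _ => ?_
  have := (abs_le.mp (happrox (p + t • (q - p)))).1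
  simp only [add_sub_cancel_left, inner_smul_right, norm_smul, mul_pow, Real.norm_eq_abs,
    sq_abs] at this
  linarith

lemma ConvexOn.add_inner_div_le_of_isMinOn_add_sq {r : E → ℝ} (hr : ConvexOn ℝ univ r)
    {η : ℝ} (hη : 0 < η) {p w : E}
    (hmin : ∀ z, r p + 1 / (2 * η) * ‖p - w‖ ^ 2 ≤ r z + 1 / (2 * η) * ‖z - w‖ ^ 2) (z : E) :
    r p + ⟪w - p, z - p⟫ / η ≤ r z := by
  refine hr.add_le_of_forall_sub_sq_le (c := ‖z - p‖ ^ 2 / (2 * η)) fun t _ _ => ?_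
  have hexpand : ‖p + t • (z - p) - w‖ ^ 2
      = ‖p - w‖ ^ 2 - 2 * t * ⟪w - p, z - p⟫ + t ^ 2 * ‖z - p‖ ^ 2 := by
    rw [show p + t • (z - p) - w = (p - w) + t • (z - p) by abel, norm_add_sq_real,
      inner_smul_right, norm_smul, mul_pow, Real.norm_eq_abs, sq_abs, ← neg_sub w p,
      inner_neg_left]
    ring
  have := hmin (p + t • (z - p))
  rw [hexpand] at this
  field_simp at this ⊢
  linarith

end ConvexLowerBounds

theorem stmt14_general (d : ℕ)
    (f r : EuclideanSpace ℝ (Fin d) → ℝ)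
    (hr : ConvexOn ℝ Set.univ r)
    (L μ : ℝ) (hL : 0 < L)
    (fμ : EuclideanSpace ℝ (Fin d) → ℝ)
    (hfμconv : ConvexOn ℝ Set.univ fμ)
    (hfμsmooth : ∀ x y, |fμ y - fμ x - ⟪gradient fμ x, y - x⟫| ≤ L / 2 * ‖y - x‖ ^ 2)
    (hfμclose : ∀ z, |fμ z - f z| ≤ L * μ ^ 2 / 2)
    (F : EuclideanSpace ℝ (Fin d) → ℝ) (hF : F = fun z => f z + r z)
    (η : ℝ) (hη0 : 0 < η) (hηL : η ≤ 1 / L)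
    (v x xplus g Δ : EuclideanSpace ℝ (Fin d))
    (hxplus : ∀ z, r xplus + 1 / (2 * η) * ‖xplus - (x - η • v)‖ ^ 2
      ≤ r z + 1 / (2 * η) * ‖z - (x - η • v)‖ ^ 2)
    (hg : g = (1 / η) • (x - xplus))
    (hΔ : Δ = v - gradient fμ x) :
    ∀ y, F y ≥ F xplus + ⟪g, y - x⟫ + η / 2 * ‖g‖ ^ 2 + ⟪Δ, xplus - y⟫ - L * μ ^ 2 := by
  intro y
  have hstep : x - xplus = η • g := by rw [hg, smul_smul, mul_one_div_cancel hη0.ne', one_smul]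
  have hnorm : ‖xplus - x‖ ^ 2 = η ^ 2 * ‖g‖ ^ 2 := by
    rw [← norm_neg, neg_sub, hstep, norm_smul, mul_pow, Real.norm_eq_abs, sq_abs]
  have hprox_inner : ⟪x - η • v - xplus, y - xplus⟫ / η = ⟪g - v, y - xplus⟫ := by
    rw [sub_right_comm, hstep, ← smul_sub, real_inner_smul_left, mul_div_cancel_left₀ _ hη0.ne']
  have hinner : ⟪gradient fμ x, y - x⟫ - ⟪gradient fμ x, xplus - x⟫ + ⟪g - v, y - xplus⟫
      = ⟪g, y - x⟫ + η * ‖g‖ ^ 2 + ⟪Δ, xplus - y⟫ := by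
    rw [← real_inner_self_eq_norm_sq, ← real_inner_smul_right, ← hstep, hΔ]
    simp only [inner_sub_left, inner_sub_right]
    ring
  have hfμ_lower := hfμconv.add_inner_le_of_abs_sub_inner_le (hfμsmooth x) y
  have hfμ_upper := (abs_le.mp (hfμsmooth x xplus)).2
  have hr_lower := hr.add_inner_div_le_of_isMinOn_add_sq hη0 hxplus y
  rw [hnorm] at hfμ_upper
  rw [hprox_inner] at hr_lower
  have hclose_y := (abs_le.mp (hfμclose y)).2
  have hclose_xplus := (abs_le.mp (hfμclose xplus)).1
  have hquad : 0 ≤ η / 2 * ‖g‖ ^ 2 * (1 - η * L) :=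
    mul_nonneg (by positivity) (by linarith [(le_div_iff₀ hL).mp hηL])
  simp only [hF, ge_iff_le]
  linarith

/-- **Key descent lemma for an inexact zeroth-order proximal gradient step.**
Here `fμ` plays the role of the ball-smoothing of `f`: it is convex, differentiable,
`L`-smooth, and `‖fμ - f‖_∞ ≤ L μ²/2`.  With `x⁺ = prox_{η r}(x - η v)`,
`g = (x - x⁺)/η` and `Δ = v - ∇fμ(x)`, the inexact descent inequality holds. -/
theorem stmt14 (d : ℕ)
    (f r : EuclideanSpace ℝ (Fin d) → ℝ)
    (hr : ConvexOn ℝ Set.univ r)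
    (L μ : ℝ) (hL : 0 < L) (hμ : 0 < μ)
    (fμ : EuclideanSpace ℝ (Fin d) → ℝ)
    (hfμconv : ConvexOn ℝ Set.univ fμ)
    (hfμdiff : Differentiable ℝ fμ)
    (hfμsmooth : ∀ x y, |fμ y - fμ x - ⟪gradient fμ x, y - x⟫| ≤ L / 2 * ‖y - x‖ ^ 2)
    (hfμclose : ∀ z, |fμ z - f z| ≤ L * μ ^ 2 / 2)
    (F : EuclideanSpace ℝ (Fin d) → ℝ) (hF : F = fun z => f z + r z)
    (η : ℝ) (hη0 : 0 < η) (hηL : η ≤ 1 / L)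
    (v x xplus g Δ : EuclideanSpace ℝ (Fin d))
    (hxplus : ∀ z, r xplus + 1 / (2 * η) * ‖xplus - (x - η • v)‖ ^ 2
      ≤ r z + 1 / (2 * η) * ‖z - (x - η • v)‖ ^ 2)
    (hg : g = (1 / η) • (x - xplus))
    (hΔ : Δ = v - gradient fμ x) :
    ∀ y, F y ≥ F xplus + ⟪g, y - x⟫ + η / 2 * ‖g‖ ^ 2 + ⟪Δ, xplus - y⟫ - L * μ ^ 2 :=
  stmt14_general d f r hr L μ hL fμ hfμconv hfμsmooth hfμclose F hF η hη0 hηL v x xplus g Δ hxplus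
    hg hΔ
end

section
/- Let f_i : ℝ^d → ℝ be convex and L-smooth, let μ > 0, β > 0, and let x* ∈ ℝ^d (in the paper, the minimizer of F = f + r). Then for all x, y ∈ ℝ^d, with u drawn uniformly from the unit sphere of ℝ^d and the same u used in both estimators, E_u[‖∇̂f_i(x; u) − ∇̂f_i(y; u)‖²] ≤ 3d·[(1 + β)·‖∇f_i(x) − ∇f_i(x*)‖² + (1 + 1/β)·‖∇f_i(y) − ∇f_i(x*)‖²] + (3/2)·L²d²μ². -/
open MeasureTheory
open scoped RealInnerProductSpace

noncomputable section

/-- `ℝ^d` as a Euclidean space. -/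
abbrev Euc (d : ℕ) := EuclideanSpace ℝ (Fin d)

/-- The random (two-point) zeroth-order gradient estimator
`∇̂g(x; u) = (d/μ)(g(x + μu) - g(x)) u`. -/
def zoEst {d : ℕ} (μ : ℝ) (g : Euc d → ℝ) (x u : Euc d) : Euc d :=
  (((d : ℝ) / μ) * (g (x + μ • u) - g x)) • u

/-- The uniform probability distribution on the unit sphere of `ℝ^d`, realized as the
pushforward of the normalized Lebesgue measure on the unit ball under radial projection. -/
def sphereUniform (d : ℕ) : Measure (Euc d) :=
  Measure.map (fun x => ‖x‖⁻¹ • x)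
    ((volume (Metric.ball (0 : Euc d) 1))⁻¹ •
      volume.restrict (Metric.ball (0 : Euc d) 1))

/-!
For `‖u‖ ≤ 1`, the first-order Taylor bounds at `x` and at `y` show that the difference of
the two estimates is `(d / μ) (μ ⟪∇f(x) - ∇f(y), u⟫ + e) u` with `|e| ≤ L μ²`, and
`(p + e)² ≤ 3p² + (3/2)e²` gives the pointwise bound
`3d² ⟪∇f(x) - ∇f(y), u⟫² + (3/2) L² d² μ²`.
The uniform measure on the sphere is invariant under linear isometries; as reflections act
transitively on spheres, `∫ ⟪g, u⟫²` depends only on `‖g‖`, and summing over the standard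
basis (Parseval, `‖u‖ = 1` a.e.) gives `∫ ⟪g, u⟫² = ‖g‖² / d`. Finally
`‖a - b‖² ≤ (1 + β)‖a‖² + (1 + 1/β)‖b‖²` with `a = ∇f(x) - ∇f(x*)`, `b = ∇f(y) - ∇f(x*)`.
-/

section SphereUniform

variable {d : ℕ}

lemma measurable_inv_norm_smul : Measurable fun x : Euc d => ‖x‖⁻¹ • x :=
  measurable_norm.inv.smul measurable_id

lemma norm_inv_norm_smul_le_one (x : Euc d) : ‖‖x‖⁻¹ • x‖ ≤ 1 := by
  rcases eq_or_ne x 0 with rfl | hx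
  · simp
  · exact (norm_smul_inv_norm hx).le

instance : IsProbabilityMeasure (sphereUniform d) := by
  constructor
  have hball : volume (Metric.ball (0 : Euc d) 1) ≠ 0 :=
    (Metric.measure_ball_pos _ _ one_pos).ne'
  rw [sphereUniform, Measure.map_apply measurable_inv_norm_smul MeasurableSet.univ,
    Set.preimage_univ, Measure.smul_apply, Measure.restrict_apply_univ, smul_eq_mul,
    ENNReal.inv_mul_cancel hball measure_ball_lt_top.ne]

lemma ae_norm_le_one_sphereUniform : ∀ᵐ u ∂(sphereUniform d), ‖u‖ ≤ 1 := by
  rw [sphereUniform, ae_map_iff measurable_inv_norm_smul.aemeasurable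
    (measurableSet_le measurable_norm measurable_const)]
  exact .of_forall norm_inv_norm_smul_le_one

lemma ae_norm_eq_one_sphereUniform (hd : 0 < d) : ∀ᵐ u ∂(sphereUniform d), ‖u‖ = 1 := by
  have : Nonempty (Fin d) := ⟨⟨0, hd⟩⟩
  rw [sphereUniform, ae_map_iff measurable_inv_norm_smul.aemeasurable
    (measurableSet_eq_fun measurable_norm measurable_const)]
  refine Measure.ae_smul_measure (ae_restrict_of_ae ?_) _
  filter_upwards [measure_eq_zero_iff_ae_notMem.1 (measure_singleton (0 : Euc d))] with x hx
  exact norm_smul_inv_norm hx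

lemma measurePreserving_sphereUniform (A : Euc d ≃ₗᵢ[ℝ] Euc d) :
    MeasurePreserving A (sphereUniform d) (sphereUniform d) := by
  have hball : MeasurePreserving A (volume.restrict (Metric.ball (0 : Euc d) 1))
      (volume.restrict (Metric.ball 0 1)) := by
    simpa [A.preimage_ball] using
      A.measurePreserving.restrict_preimage (s := Metric.ball (0 : Euc d) 1) measurableSet_ball
  have hcomm : (A ∘ fun x => ‖x‖⁻¹ • x) = (fun x => ‖x‖⁻¹ • x) ∘ A := by
    ext1 x
    simp [A.norm_map]
  refine ⟨A.continuous.measurable, ?_⟩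
  rw [sphereUniform, Measure.map_map A.continuous.measurable measurable_inv_norm_smul, hcomm,
    ← Measure.map_map measurable_inv_norm_smul A.continuous.measurable, Measure.map_smul,
    hball.map_eq]

lemma integrable_inner_sq_sphereUniform (g : Euc d) :
    Integrable (fun u => ⟪g, u⟫ ^ 2) (sphereUniform d) := by
  refine Integrable.of_bound (by fun_prop) (‖g‖ ^ 2) ?_
  filter_upwards [ae_norm_le_one_sphereUniform] with u hu
  rw [Real.norm_eq_abs, abs_pow, sq_abs]
  calc ⟪g, u⟫ ^ 2 ≤ (‖g‖ * ‖u‖) ^ 2 :=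
        sq_le_sq' (neg_le_of_abs_le (abs_real_inner_le_norm g u)) (real_inner_le_norm g u)
    _ ≤ ‖g‖ ^ 2 := by
      rw [mul_pow]
      exact mul_le_of_le_one_right (sq_nonneg _) (pow_le_one₀ (norm_nonneg u) hu)

lemma integral_inner_sq_sphereUniform_congr {g h : Euc d} (hgh : ‖g‖ = ‖h‖) :
    ∫ u, ⟪g, u⟫ ^ 2 ∂(sphereUniform d) = ∫ u, ⟪h, u⟫ ^ 2 ∂(sphereUniform d) := by
  set R := (ℝ ∙ (g - h))ᗮ.reflection
  have hR : ∀ u, ⟪g, u⟫ = ⟪h, R u⟫ := fun u => by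
    rw [← R.inner_map_map, Submodule.reflection_sub hgh]
  simp_rw [hR]
  exact (measurePreserving_sphereUniform R).integral_comp R.toHomeomorph.measurableEmbedding
    (fun u => ⟪h, u⟫ ^ 2)

lemma natCast_mul_integral_inner_sq_sphereUniform (g : Euc d) :
    d * ∫ u, ⟪g, u⟫ ^ 2 ∂(sphereUniform d) = ‖g‖ ^ 2 := by
  obtain rfl | hd := Nat.eq_zero_or_pos d
  · simp [Subsingleton.elim g 0]
  have hunit : ∀ i : Fin d, ‖EuclideanSpace.single i (1 : ℝ)‖ = 1 := fun i => by simp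
  set e : Euc d := EuclideanSpace.single ⟨0, hd⟩ 1
  have hQe : (d : ℝ) * ∫ u, ⟪e, u⟫ ^ 2 ∂(sphereUniform d) = 1 := calc
    _ = ∑ i : Fin d, ∫ u, ⟪EuclideanSpace.single i (1 : ℝ), u⟫ ^ 2 ∂(sphereUniform d) := by
      simp [integral_inner_sq_sphereUniform_congr ((hunit _).trans (hunit ⟨0, hd⟩).symm), e]
    _ = ∫ u, ‖u‖ ^ 2 ∂(sphereUniform d) := by
      rw [← integral_finsetSum _ fun i _ => integrable_inner_sq_sphereUniform _]
      simp [EuclideanSpace.inner_single_left, EuclideanSpace.real_norm_sq_eq]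
    _ = 1 := by
      rw [integral_congr_ae ((ae_norm_eq_one_sphereUniform hd).mono fun u hu =>
        show ‖u‖ ^ 2 = (1 : ℝ) by rw [hu, one_pow])]
      simp
  have hQg : ∫ u, ⟪g, u⟫ ^ 2 ∂(sphereUniform d)
      = ‖g‖ ^ 2 * ∫ u, ⟪e, u⟫ ^ 2 ∂(sphereUniform d) := by
    rw [integral_inner_sq_sphereUniform_congr (h := ‖g‖ • e) (by simp [norm_smul, e])]
    simp_rw [real_inner_smul_left, mul_pow]
    exact integral_const_mul _ _
  rw [hQg, mul_left_comm, hQe, mul_one]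

end SphereUniform

lemma add_sq_le_three_mul_sq_add (p e : ℝ) : (p + e) ^ 2 ≤ 3 * p ^ 2 + 3 / 2 * e ^ 2 := by
  nlinarith [sq_nonneg (2 * p - e)]

lemma norm_sub_sq_le_one_add_mul_add {E : Type*} [SeminormedAddCommGroup E] {β : ℝ}
    (hβ : 0 < β) (a b : E) : ‖a - b‖ ^ 2 ≤ (1 + β) * ‖a‖ ^ 2 + (1 + 1 / β) * ‖b‖ ^ 2 := by
  have hpq : (‖a‖ + ‖b‖) ^ 2 ≤ (1 + β) * ‖a‖ ^ 2 + (1 + 1 / β) * ‖b‖ ^ 2 := by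
    have : 0 ≤ (β * ‖a‖ - ‖b‖) ^ 2 / β := by positivity
    have : (β * ‖a‖ - ‖b‖) ^ 2 / β
        = (1 + β) * ‖a‖ ^ 2 + (1 + 1 / β) * ‖b‖ ^ 2 - (‖a‖ + ‖b‖) ^ 2 := by
      field_simp
      ring
    linarith
  exact (pow_le_pow_left₀ (norm_nonneg _) (norm_sub_le a b) 2).trans hpq

lemma zoEst_sub_zoEst {d : ℕ} (μ : ℝ) (g : Euc d → ℝ) (x y u : Euc d) :
    zoEst μ g x u - zoEst μ g y u
      = ((d / μ) * ((g (x + μ • u) - g x) - (g (y + μ • u) - g y))) • u := by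
  rw [zoEst, zoEst, ← sub_smul, ← mul_sub]

lemma norm_zoEst_sub_zoEst_sq_le {d : ℕ} {L μ : ℝ} (hμ : μ ≠ 0) {g : Euc d → ℝ}
    (hsmooth : ∀ x y, |g y - g x - ⟪gradient g x, y - x⟫| ≤ L / 2 * ‖y - x‖ ^ 2)
    (x y : Euc d) {u : Euc d} (hu : ‖u‖ ≤ 1) :
    ‖zoEst μ g x u - zoEst μ g y u‖ ^ 2
      ≤ 3 * d ^ 2 * ⟪gradient g x - gradient g y, u⟫ ^ 2 + 3 / 2 * L ^ 2 * d ^ 2 * μ ^ 2 := by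
  have htaylor :
      ∀ z, |g (z + μ • u) - g z - μ * ⟪gradient g z, u⟫| ≤ L * μ ^ 2 * ‖u‖ ^ 2 / 2 := fun z => by
    have := hsmooth z (z + μ • u)
    rw [add_sub_cancel_left, real_inner_smul_right, norm_smul, mul_pow, Real.norm_eq_abs,
      sq_abs] at this
    linarith
  set e := (g (x + μ • u) - g x - μ * ⟪gradient g x, u⟫)
    - (g (y + μ • u) - g y - μ * ⟪gradient g y, u⟫)
  have he : e ^ 2 ≤ L ^ 2 * μ ^ 4 := by
    have habs : |e| ≤ L * μ ^ 2 * ‖u‖ ^ 2 := by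
      linarith [abs_sub (g (x + μ • u) - g x - μ * ⟪gradient g x, u⟫)
        (g (y + μ • u) - g y - μ * ⟪gradient g y, u⟫), htaylor x, htaylor y]
    calc e ^ 2 ≤ (L * μ ^ 2 * ‖u‖ ^ 2) ^ 2 :=
          sq_le_sq' (neg_le_of_abs_le habs) (le_of_abs_le habs)
      _ = L ^ 2 * μ ^ 4 * (‖u‖ ^ 2) ^ 2 := by ring
      _ ≤ L ^ 2 * μ ^ 4 := mul_le_of_le_one_right (by positivity)
        (pow_le_one₀ (by positivity) (pow_le_one₀ (norm_nonneg u) hu))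
  have hsplit : (g (x + μ • u) - g x) - (g (y + μ • u) - g y)
      = μ * ⟪gradient g x - gradient g y, u⟫ + e := by
    rw [inner_sub_left]; ring
  rw [zoEst_sub_zoEst, hsplit, norm_smul, mul_pow, Real.norm_eq_abs, sq_abs]
  calc (d / μ * (μ * ⟪gradient g x - gradient g y, u⟫ + e)) ^ 2 * ‖u‖ ^ 2
      ≤ (d / μ) ^ 2 * (μ * ⟪gradient g x - gradient g y, u⟫ + e) ^ 2 := by
        rw [mul_pow]
        exact mul_le_of_le_one_right (by positivity) (pow_le_one₀ (norm_nonneg u) hu)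
    _ ≤ (d / μ) ^ 2
          * (3 * (μ * ⟪gradient g x - gradient g y, u⟫) ^ 2 + 3 / 2 * (L ^ 2 * μ ^ 4)) := by
        gcongr
        exact (add_sq_le_three_mul_sq_add _ _).trans (by gcongr)
    _ = 3 * d ^ 2 * ⟪gradient g x - gradient g y, u⟫ ^ 2 + 3 / 2 * L ^ 2 * d ^ 2 * μ ^ 2 := by
        field_simp

theorem stmt15_general (d : ℕ) (L μ β : ℝ) (hμ : 0 < μ) (hβ : 0 < β)
    (fi : Euc d → ℝ)
    (hsmooth : ∀ x y, |fi y - fi x - ⟪gradient fi x, y - x⟫| ≤ L / 2 * ‖y - x‖ ^ 2)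
    (xstar : Euc d) (x y : Euc d) :
    ∫ u, ‖zoEst μ fi x u - zoEst μ fi y u‖ ^ 2 ∂(sphereUniform d)
      ≤ 3 * d * ((1 + β) * ‖gradient fi x - gradient fi xstar‖ ^ 2
          + (1 + 1 / β) * ‖gradient fi y - gradient fi xstar‖ ^ 2)
        + 3 / 2 * L ^ 2 * d ^ 2 * μ ^ 2 := by
  set Δ := gradient fi x - gradient fi y
  have hΔ := norm_sub_sq_le_one_add_mul_add hβ (gradient fi x - gradient fi xstar)
    (gradient fi y - gradient fi xstar)
  rw [sub_sub_sub_cancel_right] at hΔ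
  have hint := (integrable_inner_sq_sphereUniform Δ).const_mul (3 * (d : ℝ) ^ 2)
  calc ∫ u, ‖zoEst μ fi x u - zoEst μ fi y u‖ ^ 2 ∂(sphereUniform d)
      ≤ ∫ u, (3 * d ^ 2 * ⟪Δ, u⟫ ^ 2 + 3 / 2 * L ^ 2 * d ^ 2 * μ ^ 2) ∂(sphereUniform d) :=
        integral_mono_of_nonneg (.of_forall fun u => sq_nonneg _) (hint.add (integrable_const _))
          (ae_norm_le_one_sphereUniform.mono fun u hu =>
            norm_zoEst_sub_zoEst_sq_le hμ.ne' hsmooth x y hu)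
    _ = 3 * d * (d * ∫ u, ⟪Δ, u⟫ ^ 2 ∂(sphereUniform d))
          + 3 / 2 * L ^ 2 * d ^ 2 * μ ^ 2 := by
        rw [integral_add hint (integrable_const _), integral_const_mul, integral_const]
        simp only [probReal_univ, one_smul]
        ring
    _ ≤ _ := by
        rw [natCast_mul_integral_inner_sq_sphereUniform]
        gcongr

/-- **Second-moment bound for the difference of two random zeroth-order estimates with a
shared direction** (Lemma 4 of the paper). -/
theorem stmt15 (d : ℕ) (L μ β : ℝ) (hL : 0 < L) (hμ : 0 < μ) (hβ : 0 < β)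
    (fi : Euc d → ℝ)
    (hconv : ConvexOn ℝ Set.univ fi) (hdiff : Differentiable ℝ fi)
    (hsmooth : ∀ x y, |fi y - fi x - ⟪gradient fi x, y - x⟫| ≤ L / 2 * ‖y - x‖ ^ 2)
    (xstar : Euc d) (x y : Euc d) :
    ∫ u, ‖zoEst μ fi x u - zoEst μ fi y u‖ ^ 2 ∂(sphereUniform d)
      ≤ 3 * d * ((1 + β) * ‖gradient fi x - gradient fi xstar‖ ^ 2
          + (1 + 1 / β) * ‖gradient fi y - gradient fi xstar‖ ^ 2)
        + 3 / 2 * L ^ 2 * d ^ 2 * μ ^ 2 :=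
  stmt15_general d L μ β hμ hβ fi hsmooth xstar x y
end
end
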